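/- There exists L such that whenever l₁ ≥ L in the Marker variant, μ-almost every x ∈ X satisfies ⌊t_{j+1}(x)/l_j⌋ + 1 ∉ P_j for all sufficiently large j, where t_{j+1}(x) ∈ {0, …, l_{j+1}−1} is the unique offset with x_{m·l_{j+1} − t_{j+1}(x)} ⋯ x_{(m+1)·l_{j+1} − t_{j+1}(x) − 1} ∈ C_{j+1} for all m ∈ ℤ; that is, for almost every x the C_j-block containing coordinate 0 is unpermuted for all large j. -/

import Mathlib

open Filter MeasureTheory Topology

namespace EntDim

/-- The left shift `σ` on `A^ℤ`: `(shift x) i = x (i + 1)`. -/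
def shift {A : Type*} (x : ℤ → A) : ℤ → A := fun i => x (i + 1)

/-- The shift by an integer `k`: `(shiftZ k x) i = x (i + k)`, i.e. `σ^k`. -/
def shiftZ {A : Type*} (k : ℤ) (x : ℤ → A) : ℤ → A := fun i => x (i + k)

/-- A subshift: a nonempty closed shift-invariant subset of `A^ℤ`. -/
def IsSubshift {A : Type*} [TopologicalSpace A] (X : Set (ℤ → A)) : Prop :=
  X.Nonempty ∧ IsClosed X ∧ shift '' X = X

/-- `B_n(X)`: the set of words of length `n` occurring in `X`. -/
def wordsOf {A : Type*} (X : Set (ℤ → A)) (n : ℕ) : Set (Fin n → A) :=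
  { w | ∃ x ∈ X, ∀ i : Fin n, w i = x ((i : ℕ) : ℤ) }

/-- `X` is minimal: every orbit is dense in `X`. -/
def IsMinimal {A : Type*} [TopologicalSpace A] (X : Set (ℤ → A)) : Prop :=
  ∀ x ∈ X, X ⊆ closure { z | ∃ k : ℤ, z = shiftZ k x }

/-- `μ` is a shift-invariant Borel probability measure carried by `X`. -/
def IsInvProbOn {A : Type*} [MeasurableSpace A] (μ : Measure (ℤ → A))
    (X : Set (ℤ → A)) : Prop :=
  IsProbabilityMeasure μ ∧ MeasurePreserving shift μ μ ∧ μ X = 1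

/-- The cylinder `[u] = {x ∈ X : x_i = u_i for 0 ≤ i < |u|}` of a finite word `u`. -/
def cylW {A : Type*} (X : Set (ℤ → A)) (u : List A) : Set (ℤ → A) :=
  { x | x ∈ X ∧ ∀ i : Fin u.length, x ((i : ℕ) : ℤ) = u.get i }

/-- The `n`-cylinder `P_n(x) = {y ∈ X : y_i = x_i for 0 ≤ i < n}` of a point `x`. -/
def cylPt {A : Type*} (X : Set (ℤ → A)) (x : ℤ → A) (n : ℕ) : Set (ℤ → A) :=
  { y | y ∈ X ∧ ∀ i : ℕ, i < n → y (i : ℤ) = x (i : ℤ) }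

/-- The first return time `R_n(x) = inf {k ≥ 1 : x_{k+i} = x_i for 0 ≤ i < n}`
(with the junk value `0` if no such `k` exists). -/
noncomputable def retTime {A : Type*} (x : ℤ → A) (n : ℕ) : ℕ :=
  sInf { k : ℕ | 1 ≤ k ∧ ∀ i : ℕ, i < n → x ((k : ℤ) + (i : ℕ)) = x ((i : ℕ) : ℤ) }

/-- The sequence of pairs `(l_j, N_j)`, `j ≥ 1`, with `l_1 = l1`, `N_1 = 2^⌊√l1⌋`,
`l_{j+1} = l_j · N_j` and `N_{j+1} = (⌊√N_j⌋)!`.  (The value at `j = 0` is junk.) -/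
def lN (l1 : ℕ) : ℕ → ℕ × ℕ
  | 0 => (0, 0)
  | 1 => (l1, 2 ^ Nat.sqrt l1)
  | j + 2 => ((lN l1 (j + 1)).1 * (lN l1 (j + 1)).2, Nat.factorial (Nat.sqrt (lN l1 (j + 1)).2))

/-- The length `l_j` of the words of `C_j`. -/
def lseq (l1 j : ℕ) : ℕ := (lN l1 j).1

/-- The cardinality `N_j` of `C_j`. -/
def Nseq (l1 j : ℕ) : ℕ := (lN l1 j).2

/-- `i ∈ P_j = {2} ∪ {m² : 2 ≤ m ≤ ⌊√N⌋}` (1-based position `i`, where `N = N_j`):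
the permuted (unstable) positions. -/
def PermutedIdx (N i : ℕ) : Prop :=
  i = 2 ∨ ∃ m : ℕ, 2 ≤ m ∧ m ≤ Nat.sqrt N ∧ i = m ^ 2

/-- The data of the Construction: a positive integer `l1` and ordered lists
`C j` (`j ≥ 1`) of distinct binary words (`C 0` is irrelevant), where `C 1` consists of
`N_1 = 2^⌊√l1⌋` words of length `l1`, `C j` consists of `N_j` words of length `l_j`, and
`C (j+1)` is the set of all concatenations of the words of `C j` reordered by a
permutation preserving `P_j` and fixing every position outside `P_j`. -/
structure Construction where
  l1 : ℕ
  hl1 : 0 < l1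
  C : ℕ → List (List Bool)
  nodup : ∀ j, 1 ≤ j → (C j).Nodup
  length_eq : ∀ j, 1 ≤ j → (C j).length = Nseq l1 j
  wordLength : ∀ j, 1 ≤ j → ∀ w ∈ C j, w.length = lseq l1 j
  mem_succ : ∀ j, 1 ≤ j → ∀ w : List Bool,
    w ∈ C (j + 1) ↔
      ∃ τ : Equiv.Perm (Fin (C j).length),
        (∀ i : Fin (C j).length, ¬ PermutedIdx (Nseq l1 j) ((i : ℕ) + 1) → τ i = i) ∧
        (∀ i : Fin (C j).length, PermutedIdx (Nseq l1 j) ((i : ℕ) + 1) →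
            PermutedIdx (Nseq l1 j) ((τ i : ℕ) + 1)) ∧
        w = (List.ofFn fun i : Fin (C j).length => (C j).get (τ i)).flatten

/-- The subshift `X` of the Construction: all `x ∈ {0,1}^ℤ` each of whose finite
subwords occurs as a subword of some word in some `C j`. -/
def Construction.space (c : Construction) : Set (ℤ → Bool) :=
  { x | ∀ (a : ℤ) (n : ℕ), ∃ j, 1 ≤ j ∧ ∃ w ∈ c.C j,
      (List.ofFn fun i : Fin n => x (a + (i : ℕ))) <:+: w }

/-- The offset `t_j(x) ∈ {0, …, l_j − 1}` of the decomposition of `x` into `C j`-words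
(defined as an infimum; it is unique in the Marker variant). -/
noncomputable def Construction.tOffset (c : Construction) (j : ℕ) (x : ℤ → Bool) : ℕ :=
  sInf { t : ℕ | t < lseq c.l1 j ∧ ∀ m : ℤ,
    (List.ofFn fun i : Fin (lseq c.l1 j) =>
      x (m * (lseq c.l1 j : ℤ) - (t : ℤ) + (i : ℕ))) ∈ c.C j }

/-- The Marker variant: every word of `C 1` begins with `001`, and `00` occurs in each
word of `C 1` only as its prefix. -/
structure MarkerConstruction extends Construction where
  marker_prefix : ∀ w ∈ C 1, [false, false, true] <+: w
  marker_unique : ∀ w ∈ C 1, ∀ n : ℕ, [false, false] <+: w.drop n → n = 0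


/-!
The offset `t_j(x)` is unique. At level 1 the marker `001` can only occur at the start of a
`C₁`-word. Inductively, two `C_{j+1}`-offsets of `x` agree modulo `l_j`, so they differ by `e·l_j`;
since fewer than half of the residues mod `N_j` are permuted positions, some unpermuted position
`a` has `a - e` unpermuted as well, and the two decompositions read one and the same subword of `x`
as `u_a` and as `u_{a-e}`, which forces `e ≡ 0 (mod N_j)`.

Hence the sets `{x : x decomposes into C_{j+1}-words with offset t}`, `0 ≤ t < l_{j+1}`, are
disjoint; they are translates of each other, so each has measure at most `1 / l_{j+1}`. At most
`√N_j · l_j` offsets put coordinate `0` into a permuted block, so that event has measure at most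
`√N_j / N_j ≤ 2^{-j}`, and Borel–Cantelli concludes.
-/

open scoped Nat ENNReal

lemma take_drop_flatten_of_forall_length_eq {α : Type*} {L : List (List α)} {l : ℕ}
    (hL : ∀ w ∈ L, w.length = l) {i : ℕ} (hi : i < L.length) :
    (L.flatten.drop (i * l)).take l = L[i] := by
  have hmap : L.map List.length = List.replicate L.length l := by
    rw [List.map_congr_left hL, List.map_const']
  have h := List.drop_take_succ_flatten_eq_getElem L i hi
  simp only [hmap, List.take_replicate, List.sum_replicate, smul_eq_mul,
    Nat.min_eq_left hi.le, Nat.min_eq_left hi] at h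
  rwa [List.drop_take, ← Nat.sub_mul, show i.succ - i = 1 by omega, one_mul] at h

def word {α : Type*} (x : ℤ → α) (a : ℤ) (n : ℕ) : List α :=
  List.ofFn fun i : Fin n => x (a + i)

@[simp] lemma length_word {α : Type*} (x : ℤ → α) (a : ℤ) (n : ℕ) :
    (word x a n).length = n := by
  simp [word]

lemma take_drop_word {α : Type*} (x : ℤ → α) (a : ℤ) {k m n : ℕ} (h : k + m ≤ n) :
    ((word x a n).drop k).take m = word x (a + k) m := by
  apply List.ext_getElem
  · simp; omega
  · intro i _ _
    simp only [word, List.getElem_take, List.getElem_drop, List.getElem_ofFn]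
    push_cast
    ring_nf

lemma take_word {α : Type*} (x : ℤ → α) (a : ℤ) {m n : ℕ} (h : m ≤ n) :
    (word x a n).take m = word x a m := by
  simpa using take_drop_word x a (k := 0) (by omega : 0 + m ≤ n)

lemma word_three {α : Type*} (x : ℤ → α) (a : ℤ) :
    word x a 3 = [x a, x (a + 1), x (a + 2)] := by
  simp [word, List.ofFn_succ]

lemma word_shift {α : Type*} (x : ℤ → α) (a : ℤ) (n : ℕ) :
    word (shift x) a n = word x (a + 1) n := by
  simp only [word, shift]
  ring_nf

lemma lseq_succ (l1 : ℕ) {j : ℕ} (hj : 1 ≤ j) : lseq l1 (j + 1) = lseq l1 j * Nseq l1 j := by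
  obtain ⟨j, rfl⟩ := Nat.exists_eq_add_of_le' hj
  rfl

lemma Nseq_succ (l1 : ℕ) {j : ℕ} (hj : 1 ≤ j) : Nseq l1 (j + 1) = (Nat.sqrt (Nseq l1 j))! := by
  obtain ⟨j, rfl⟩ := Nat.exists_eq_add_of_le' hj
  rfl

lemma Nseq_pos (l1 : ℕ) {j : ℕ} (hj : 1 ≤ j) : 0 < Nseq l1 j := by
  induction j, hj using Nat.le_induction with
  | base => exact Nat.two_pow_pos _
  | succ j hj _ => rw [Nseq_succ l1 hj]; exact Nat.factorial_pos _

lemma lseq_pos {l1 : ℕ} (hl1 : 0 < l1) {j : ℕ} (hj : 1 ≤ j) : 0 < lseq l1 j := by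
  induction j, hj using Nat.le_induction with
  | base => exact hl1
  | succ j hj ih => rw [lseq_succ l1 hj]; exact Nat.mul_pos ih (Nseq_pos l1 hj)

lemma two_mul_sq_le_factorial {m : ℕ} (hm : 8 ≤ m) : (2 * m) ^ 2 ≤ m ! := by
  induction m, hm using Nat.le_induction with
  | base => decide
  | succ m hm ih =>
    rw [Nat.factorial_succ]
    nlinarith

lemma two_pow_le_sqrt_Nseq {l1 : ℕ} (hl1 : 36 ≤ l1) {j : ℕ} (hj : 1 ≤ j) :
    2 ^ (j + 2) ≤ Nat.sqrt (Nseq l1 j) := by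
  induction j, hj using Nat.le_induction with
  | base =>
    have h6 : 6 ≤ Nat.sqrt l1 := Nat.le_sqrt.mpr hl1
    refine Nat.le_sqrt.mpr ?_
    calc 2 ^ (1 + 2) * 2 ^ (1 + 2) = 2 ^ 6 := by norm_num
      _ ≤ 2 ^ Nat.sqrt l1 := Nat.pow_le_pow_right two_pos h6
  | succ j hj ih =>
    have h8 : 8 ≤ Nat.sqrt (Nseq l1 j) :=
      le_trans (by simpa using Nat.pow_le_pow_right two_pos (by omega : 3 ≤ j + 2)) ih
    rw [Nseq_succ l1 hj, Nat.le_sqrt]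
    calc 2 ^ (j + 1 + 2) * 2 ^ (j + 1 + 2) = (2 * 2 ^ (j + 2)) ^ 2 := by ring
      _ ≤ (2 * Nat.sqrt (Nseq l1 j)) ^ 2 := by gcongr
      _ ≤ _ := two_mul_sq_le_factorial h8

lemma two_mul_sqrt_Nseq_lt {l1 : ℕ} (hl1 : 36 ≤ l1) {j : ℕ} (hj : 1 ≤ j) :
    2 * Nat.sqrt (Nseq l1 j) < Nseq l1 j := by
  have h8 : 8 ≤ Nat.sqrt (Nseq l1 j) :=
    le_trans (by simpa using Nat.pow_le_pow_right two_pos (by omega : 3 ≤ j + 2))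
      (two_pow_le_sqrt_Nseq hl1 hj)
  have := Nat.sqrt_le (Nseq l1 j)
  nlinarith

lemma sqrt_Nseq_mul_two_pow_le {l1 : ℕ} (hl1 : 36 ≤ l1) {j : ℕ} (hj : 1 ≤ j) :
    Nat.sqrt (Nseq l1 j) * 2 ^ j ≤ Nseq l1 j := by
  have h := two_pow_le_sqrt_Nseq hl1 hj
  have : 2 ^ j ≤ 2 ^ (j + 2) := Nat.pow_le_pow_right two_pos (by omega)
  calc Nat.sqrt (Nseq l1 j) * 2 ^ j ≤ Nat.sqrt (Nseq l1 j) * Nat.sqrt (Nseq l1 j) :=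
        Nat.mul_le_mul_left _ (by omega)
    _ ≤ Nseq l1 j := Nat.sqrt_le _

lemma permutedIdx_iff_mem_insert {N i : ℕ} :
    PermutedIdx N i ↔ i ∈ insert 2 ((Finset.Icc 2 (Nat.sqrt N)).image (· ^ 2)) := by
  simp only [PermutedIdx, Finset.mem_insert, Finset.mem_image, Finset.mem_Icc, and_assoc,
    eq_comm]

instance (N : ℕ) : DecidablePred (PermutedIdx N) := fun _ =>
  decidable_of_iff' _ permutedIdx_iff_mem_insert

lemma not_permutedIdx_one (N : ℕ) : ¬ PermutedIdx N 1 := by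
  rintro (h | ⟨m, hm, -, h⟩)
  · omega
  · nlinarith

open Finset in
lemma card_filter_permutedIdx_le {N : ℕ} (hN : 0 < N) :
    #{i ∈ range N | PermutedIdx N (i + 1)} ≤ Nat.sqrt N := by
  calc #{i ∈ range N | PermutedIdx N (i + 1)}
      ≤ #(insert 2 ((Icc 2 (Nat.sqrt N)).image (· ^ 2))) :=
        card_le_card_of_injOn (· + 1)
          (fun _ hi => permutedIdx_iff_mem_insert.mp (mem_filter.mp hi).2)
          (fun _ _ _ _ h => by simpa using h)
    _ ≤ #((Icc 2 (Nat.sqrt N)).image (· ^ 2)) + 1 := card_insert_le _ _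
    _ ≤ #(Icc 2 (Nat.sqrt N)) + 1 := Nat.add_le_add_right card_image_le _
    _ = Nat.sqrt N := by have := Nat.sqrt_pos.mpr hN; simp; omega

open Finset in
lemma exists_notMem_and_sub_notMem {G : Type*} [AddGroup G] [Fintype G] [DecidableEq G]
    (S : Finset G) (hS : 2 * #S < Fintype.card G) (g : G) : ∃ a, a ∉ S ∧ a - g ∉ S := by
  have hcard : #(S ∪ S.image (fun x : G => x + g)) < #(univ : Finset G) := by
    calc #(S ∪ S.image (fun x : G => x + g)) ≤ #S + #(S.image (fun x : G => x + g)) :=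
          card_union_le _ _
      _ ≤ #S + #S := Nat.add_le_add_left card_image_le _
      _ < #(univ : Finset G) := by rw [card_univ]; omega
  obtain ⟨a, -, ha⟩ := exists_mem_notMem_of_card_lt_card hcard
  refine ⟨a, fun h => ha (mem_union_left _ h), fun h => ha (mem_union_right _ ?_)⟩
  exact mem_image.mpr ⟨a - g, h, sub_add_cancel a g⟩

lemma exists_notMem_and_modEq_sub_notMem {N : ℕ} (S : Finset ℕ) (hS : 2 * S.card < N)
    (e : ℤ) :
    ∃ a k : ℕ, a < N ∧ k < N ∧ a ∉ S ∧ k ∉ S ∧ (a : ℤ) - e ≡ k [ZMOD N] := by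
  classical
  have : NeZero N := ⟨by omega⟩
  obtain ⟨z, hz, hze⟩ := exists_notMem_and_sub_notMem (S.image (Nat.cast : ℕ → ZMod N))
    (by rw [ZMod.card]; exact (Nat.mul_le_mul_left 2 Finset.card_image_le).trans_lt hS) e
  refine ⟨z.val, (z - e).val, z.val_lt, (z - e).val_lt,
    fun h => hz (Finset.mem_image.mpr ⟨_, h, z.natCast_zmod_val⟩),
    fun h => hze (Finset.mem_image.mpr ⟨_, h, (z - e).natCast_zmod_val⟩), ?_⟩
  rw [← ZMod.intCast_eq_intCast_iff]
  push_cast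
  simp

namespace Construction

/-- `x` is a concatenation of words of `C j` placed at the positions `≡ -t (mod l_j)`. -/
def IsDecomposition (c : Construction) (j : ℕ) (t : ℤ) (x : ℤ → Bool) : Prop :=
  ∀ m : ℤ, word x (m * lseq c.l1 j - t) (lseq c.l1 j) ∈ c.C j

variable {c : Construction} {j : ℕ}

lemma chunk_of_mem_succ (hj : 1 ≤ j) {w : List Bool} (hw : w ∈ c.C (j + 1)) {k : ℕ}
    (hk : k < Nseq c.l1 j) :
    (w.drop (k * lseq c.l1 j)).take (lseq c.l1 j) ∈ c.C j ∧
      (¬ PermutedIdx (Nseq c.l1 j) (k + 1) →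
        (c.C j)[k]? = some ((w.drop (k * lseq c.l1 j)).take (lseq c.l1 j))) := by
  obtain ⟨τ, hfix, -, rfl⟩ := (c.mem_succ j hj w).mp hw
  have hk' : k < (c.C j).length := by rwa [c.length_eq j hj]
  have hlen : ∀ v ∈ List.ofFn (fun i => (c.C j).get (τ i)), v.length = lseq c.l1 j := by
    intro v hv
    obtain ⟨i, rfl⟩ := List.mem_ofFn.mp hv
    exact c.wordLength j hj _ (List.get_mem _ _)
  rw [take_drop_flatten_of_forall_length_eq hlen (by simpa using hk'), List.getElem_ofFn]
  refine ⟨List.get_mem _ _, fun hP => ?_⟩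
  rw [hfix ⟨k, hk'⟩ hP]
  simp

variable {t t' : ℤ} {x : ℤ → Bool}

lemma IsDecomposition.chunk (hj : 1 ≤ j) (h : c.IsDecomposition (j + 1) t x) {b : ℤ} {k : ℕ}
    (hk : k < Nseq c.l1 j) (hbk : b ≡ k [ZMOD Nseq c.l1 j]) :
    word x (b * lseq c.l1 j - t) (lseq c.l1 j) ∈ c.C j ∧
      (¬ PermutedIdx (Nseq c.l1 j) (k + 1) →
        (c.C j)[k]? = some (word x (b * lseq c.l1 j - t) (lseq c.l1 j))) := by
  obtain ⟨M, hM⟩ := hbk.symm.dvd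
  have hfit : k * lseq c.l1 j + lseq c.l1 j ≤ lseq c.l1 (j + 1) := by
    rw [lseq_succ c.l1 hj, ← Nat.succ_mul, mul_comm]
    exact Nat.mul_le_mul_left _ hk
  have hpos :
      M * (lseq c.l1 (j + 1) : ℤ) - t + (k * lseq c.l1 j : ℕ) = b * lseq c.l1 j - t := by
    rw [lseq_succ c.l1 hj]
    push_cast
    linear_combination -(lseq c.l1 j : ℤ) * hM
  have := chunk_of_mem_succ hj (h M) hk
  rwa [take_drop_word _ _ hfit, hpos] at this

lemma IsDecomposition.of_succ (hj : 1 ≤ j) (h : c.IsDecomposition (j + 1) t x) :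
    c.IsDecomposition j t x := by
  intro m
  have hN : (0 : ℤ) < Nseq c.l1 j := by exact_mod_cast Nseq_pos c.l1 hj
  have hk : (m % Nseq c.l1 j).toNat < Nseq c.l1 j := by
    have := Int.emod_lt_of_pos m hN
    omega
  refine (h.chunk hj hk ?_).1
  rw [Int.toNat_of_nonneg (Int.emod_nonneg m hN.ne')]
  exact (Int.mod_modEq m _).symm

open Finset in
lemma IsDecomposition.dvd_sub_succ (hj : 1 ≤ j)
    (hN : 2 * Nat.sqrt (Nseq c.l1 j) < Nseq c.l1 j)
    (h : c.IsDecomposition (j + 1) t x) (h' : c.IsDecomposition (j + 1) t' x)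
    (hdvd : (lseq c.l1 j : ℤ) ∣ t - t') : (lseq c.l1 (j + 1) : ℤ) ∣ t - t' := by
  obtain ⟨e, he⟩ := hdvd
  set N := Nseq c.l1 j
  obtain ⟨a, k, ha, hk, haS, hkS, hak⟩ := exists_notMem_and_modEq_sub_notMem
    {i ∈ range N | PermutedIdx N (i + 1)}
    ((Nat.mul_le_mul_left 2 (card_filter_permutedIdx_le (Nseq_pos c.l1 hj))).trans_lt hN) e
  have hPa : ¬ PermutedIdx N (a + 1) := fun hP => haS (mem_filter.mpr ⟨mem_range.mpr ha, hP⟩)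
  have hPk : ¬ PermutedIdx N (k + 1) := fun hP => hkS (mem_filter.mpr ⟨mem_range.mpr hk, hP⟩)
  have hwa := (h.chunk hj ha Int.ModEq.rfl).2 hPa
  have hwk := (h'.chunk hj hk hak).2 hPk
  -- one and the same subword of `x` is chunk `a` of the first decomposition and chunk `k` of the
  -- second, so `a = k` because the words of `C j` are distinct
  rw [show ((a : ℤ) - e) * lseq c.l1 j - t' = a * lseq c.l1 j - t by linear_combination he,
    ← hwa, List.getElem?_inj (by rwa [c.length_eq j hj]) (c.nodup j hj)] at hwk
  subst hwk
  obtain ⟨f, hf⟩ : (N : ℤ) ∣ e := by simpa using hak.dvd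
  rw [he, hf, lseq_succ c.l1 hj]
  exact ⟨f, by push_cast; ring⟩


lemma IsDecomposition.word_marker {c : MarkerConstruction} (h : c.IsDecomposition 1 t x)
    (m : ℤ) : word x (m * c.l1 - t) 3 = [false, false, true] := by
  have hpre := c.marker_prefix _ (h m)
  have hl : 3 ≤ c.l1 := by simpa [lseq, lN] using hpre.length_le
  rw [List.prefix_iff_eq_take] at hpre
  rw [hpre]
  exact (take_word x _ hl).symm

lemma IsDecomposition.dvd_of_marker {c : MarkerConstruction} (h : c.IsDecomposition 1 t x)
    {p : ℤ} (hp : word x p 3 = [false, false, true]) : (c.l1 : ℤ) ∣ p + t := by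
  have hl : (0 : ℤ) < c.l1 := by exact_mod_cast c.hl1
  set M := (p + t) / c.l1
  set i := (p + t) % c.l1
  have hpM : p = M * c.l1 - t + i := by linarith [Int.mul_ediv_add_emod (p + t) c.l1]
  have hi : 0 ≤ i ∧ i < c.l1 := ⟨Int.emod_nonneg _ hl.ne', Int.emod_lt_of_pos _ hl⟩
  rcases lt_or_eq_of_le (show i + 1 ≤ c.l1 by omega) with hlt | heq
  · obtain ⟨n, hn⟩ : ∃ n : ℕ, (n : ℤ) = i := ⟨i.toNat, Int.toNat_of_nonneg hi.1⟩
    have h00 : [false, false] <+: (word x (M * c.l1 - t) c.l1).drop n := by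
      rw [List.prefix_iff_eq_take, show [false, false].length = 2 from rfl,
        take_drop_word x _ (by omega), hn, ← hpM, ← take_word x p (by norm_num : 2 ≤ 3), hp]
      rfl
    have hn0 := c.marker_unique _ (h M) n h00
    exact Int.dvd_of_emod_eq_zero (by omega)
  · -- the block `M + 1` would then start at `p + 1`, but `x (p + 2) = true`
    have hnext := h.word_marker (M + 1)
    rw [show (M + 1) * c.l1 - t = p + 1 by linarith] at hnext
    simp only [word_three, List.cons.injEq, and_true] at hp hnext
    rw [add_assoc, one_add_one_eq_two, hp.2.2] at hnext
    simp at hnext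

lemma IsDecomposition.dvd_sub_one {c : MarkerConstruction} (h : c.IsDecomposition 1 t x)
    (h' : c.IsDecomposition 1 t' x) : (c.l1 : ℤ) ∣ t - t' := by
  have := h'.dvd_of_marker (h.word_marker 0)
  rwa [zero_mul, zero_sub, neg_add_eq_sub, ← dvd_neg, neg_sub] at this

lemma IsDecomposition.dvd_sub {c : MarkerConstruction}
    (hN : ∀ j, 1 ≤ j → 2 * Nat.sqrt (Nseq c.l1 j) < Nseq c.l1 j) (hj : 1 ≤ j)
    (h : c.IsDecomposition j t x) (h' : c.IsDecomposition j t' x) :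
    (lseq c.l1 j : ℤ) ∣ t - t' := by
  induction j, hj using Nat.le_induction with
  | base => exact h.dvd_sub_one h'
  | succ j hj ih => exact h.dvd_sub_succ hj (hN j hj) h' (ih (h.of_succ hj) (h'.of_succ hj))

lemma IsDecomposition.unique {c : MarkerConstruction}
    (hN : ∀ j, 1 ≤ j → 2 * Nat.sqrt (Nseq c.l1 j) < Nseq c.l1 j) (hj : 1 ≤ j) {s s' : ℕ}
    (hs : s < lseq c.l1 j) (hs' : s' < lseq c.l1 j)
    (h : c.IsDecomposition j s x) (h' : c.IsDecomposition j s' x) : s = s' := by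
  have := Int.eq_zero_of_abs_lt_dvd (h.dvd_sub hN hj h')
    (abs_sub_lt_iff.mpr ⟨by omega, by omega⟩)
  omega

lemma tOffset_spec (h : c.tOffset j x ≠ 0) :
    c.tOffset j x < lseq c.l1 j ∧ c.IsDecomposition j (c.tOffset j x) x := by
  refine Nat.sInf_mem (s := {t : ℕ | t < lseq c.l1 j ∧ c.IsDecomposition j t x}) ?_
  by_contra hempty
  exact h ((congrArg sInf (Set.not_nonempty_iff_eq_empty.mp hempty)).trans Nat.sInf_empty)

variable (c j) in
lemma measurableSet_isDecomposition (t : ℤ) :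
    MeasurableSet {x : ℤ → Bool | c.IsDecomposition j t x} := by
  simp only [IsDecomposition, Set.ofPred_forall]
  refine MeasurableSet.iInter fun m => ?_
  exact (measurable_pi_lambda
    (fun (x : ℤ → Bool) (i : Fin (lseq c.l1 j)) => x (m * lseq c.l1 j - t + i))
    fun i => measurable_pi_apply _)
    (Set.toFinite {v : Fin (lseq c.l1 j) → Bool | List.ofFn v ∈ c.C j}).measurableSet

variable (c j) in
lemma preimage_shift_isDecomposition (t : ℤ) :
    shift ⁻¹' {x | c.IsDecomposition j (t + 1) x} = {x | c.IsDecomposition j t x} := by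
  ext x
  simp only [Set.mem_preimage, Set.mem_ofPred_eq, IsDecomposition, word_shift,
    sub_add_eq_sub_sub, sub_add_cancel]

lemma measure_isDecomposition_eq {μ : Measure (ℤ → Bool)}
    (hshift : MeasurePreserving shift μ μ) (t : ℕ) :
    μ {x | c.IsDecomposition j t x} = μ {x | c.IsDecomposition j 0 x} := by
  induction t with
  | zero => rfl
  | succ t ih =>
    rw [← ih, Nat.cast_succ, ← preimage_shift_isDecomposition c j t]
    exact (hshift.measure_preimage (measurableSet_isDecomposition c j _).nullMeasurableSet).symm

open Finset in
lemma lseq_mul_measure_isDecomposition_le {c : MarkerConstruction}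
    (hN : ∀ j, 1 ≤ j → 2 * Nat.sqrt (Nseq c.l1 j) < Nseq c.l1 j) (hj : 1 ≤ j)
    {μ : Measure (ℤ → Bool)} [IsProbabilityMeasure μ] (hshift : MeasurePreserving shift μ μ) :
    (lseq c.l1 j : ℝ≥0∞) * μ {x | c.IsDecomposition j 0 x} ≤ 1 := by
  have hdisj : (range (lseq c.l1 j) : Set ℕ).PairwiseDisjoint
      fun t : ℕ => {x | c.IsDecomposition j t x} := fun t ht t' ht' hne =>
    Set.disjoint_left.mpr fun x hx hx' =>
      hne (IsDecomposition.unique hN hj (mem_range.mp ht) (mem_range.mp ht') hx hx')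
  calc (lseq c.l1 j : ℝ≥0∞) * μ {x | c.IsDecomposition j 0 x}
      = ∑ t ∈ range (lseq c.l1 j), μ {x | c.IsDecomposition j t x} := by
        simp [measure_isDecomposition_eq hshift]
    _ = μ (⋃ t ∈ range (lseq c.l1 j), {x | c.IsDecomposition j t x}) :=
        (measure_biUnion_finset hdisj fun t _ => measurableSet_isDecomposition _ _ _).symm
    _ ≤ 1 := prob_le_one

open Finset in
lemma setOf_permutedIdx_tOffset_subset (hj : 1 ≤ j) :
    {x | PermutedIdx (Nseq c.l1 j) (c.tOffset (j + 1) x / lseq c.l1 j + 1)} ⊆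
      ⋃ a ∈ {a ∈ range (Nseq c.l1 j) | PermutedIdx (Nseq c.l1 j) (a + 1)},
        ⋃ r ∈ range (lseq c.l1 j),
          {x | c.IsDecomposition (j + 1) ((a * lseq c.l1 j + r : ℕ) : ℤ) x} := by
  intro x hx
  have hl : 0 < lseq c.l1 j := lseq_pos c.hl1 hj
  have h0 : c.tOffset (j + 1) x ≠ 0 := fun h0 => by
    rw [Set.mem_ofPred_eq, h0, Nat.zero_div] at hx
    exact not_permutedIdx_one _ hx
  obtain ⟨hlt, hdec⟩ := tOffset_spec h0
  rw [lseq_succ c.l1 hj, mul_comm] at hlt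
  simp only [Set.mem_iUnion]
  refine ⟨_, mem_filter.mpr ⟨mem_range.mpr ((Nat.div_lt_iff_lt_mul hl).mpr hlt), hx⟩,
    c.tOffset (j + 1) x % lseq c.l1 j, mem_range.mpr (Nat.mod_lt _ hl), ?_⟩
  rwa [Nat.div_add_mod']

open Finset in
lemma measure_permutedIdx_tOffset_le {c : MarkerConstruction} (hL : 36 ≤ c.l1)
    {μ : Measure (ℤ → Bool)} [IsProbabilityMeasure μ] (hshift : MeasurePreserving shift μ μ)
    (j : ℕ) :
    μ {x | PermutedIdx (Nseq c.l1 j) (c.tOffset (j + 1) x / lseq c.l1 j + 1)} ≤ (2 ^ j)⁻¹ := by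
  rcases Nat.eq_zero_or_pos j with rfl | hj
  · simpa using prob_le_one
  set l := lseq c.l1 j
  set P := {a ∈ range (Nseq c.l1 j) | PermutedIdx (Nseq c.l1 j) (a + 1)}
  set μ₀ := μ {x | c.IsDecomposition (j + 1) 0 x}
  have hcount : #P * l * 2 ^ j ≤ lseq c.l1 (j + 1) := by
    rw [lseq_succ c.l1 hj, mul_right_comm, mul_comm l]
    exact Nat.mul_le_mul_right _ ((Nat.mul_le_mul_right _
      (card_filter_permutedIdx_le (Nseq_pos c.l1 hj))).trans (sqrt_Nseq_mul_two_pow_le hL hj))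
  have hbound : μ {x | PermutedIdx (Nseq c.l1 j) (c.tOffset (j + 1) x / l + 1)} ≤
      (#P * l : ℕ) * μ₀ := by
    refine (measure_mono (setOf_permutedIdx_tOffset_subset hj)).trans <|
      (measure_biUnion_finset_le _ _).trans <|
      (sum_le_sum fun _ _ => measure_biUnion_finset_le _ _).trans_eq ?_
    simp only [measure_isDecomposition_eq hshift, sum_const, card_range, nsmul_eq_mul, μ₀]
    push_cast
    ring
  rw [ENNReal.le_inv_iff_mul_le]
  calc _ ≤ (#P * l : ℕ) * μ₀ * 2 ^ j := by gcongr
    _ = (#P * l * 2 ^ j : ℕ) * μ₀ := by push_cast; ring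
    _ ≤ lseq c.l1 (j + 1) * μ₀ := by gcongr
    _ ≤ 1 := lseq_mul_measure_isDecomposition_le (fun _ hj => two_mul_sqrt_Nseq_lt hL hj)
        (by omega) hshift

end Construction

/-- Marker variant with `l₁` large: for `μ`-a.e. `x`, the `C_j`-block of
`x` containing coordinate `0` is unpermuted for all sufficiently large `j`. -/
theorem statement12 :
    ∃ L : ℕ, ∀ c : MarkerConstruction, L ≤ c.l1 →
      ∀ μ : Measure (ℤ → Bool), IsInvProbOn μ c.toConstruction.space →
        ∀ᵐ x ∂μ, ∃ J : ℕ, ∀ j : ℕ, J ≤ j →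
          ¬ PermutedIdx (Nseq c.l1 j)
              (c.toConstruction.tOffset (j + 1) x / lseq c.l1 j + 1) := by
  refine ⟨36, fun c hL μ hμ => ?_⟩
  obtain ⟨hprob, hshift, -⟩ := hμ
  have hsum :
      ∑' j, μ {x | PermutedIdx (Nseq c.l1 j) (c.tOffset (j + 1) x / lseq c.l1 j + 1)} ≠ ∞ := by
    refine ne_top_of_le_ne_top ?_
      (ENNReal.tsum_le_tsum (Construction.measure_permutedIdx_tOffset_le hL hshift))
    simp only [ENNReal.inv_pow, ENNReal.tsum_geometric_two]
    exact ENNReal.ofNat_ne_top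
  filter_upwards [ae_eventually_notMem hsum] with x hx
  exact eventually_atTop.mp hx

end EntDim
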